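/- Let X be a finite ultrametric space with positive additive measure ν and tree of balls S with maximal ball K, and let T : S \ S_min → ℝ. Define Q_{IJ} = √(ν(I)ν(J))·T(sup(I,J)) for distinct points I, J and Q_{II} = 0. Then Σ_{I,J ∈ S_min, I ≠ J} √(ν(I)ν(J))·Q_{IJ} = Σ_{I,J ∈ S_min, I ≠ J} ν(I)ν(J)T(sup(I,J)) = Σ_{B ∈ S \ S_min} T(B)·(ν(B)² − Σ_j ν(B_j)²), where B_j are the maximal proper subballs of B. -/
import Mathlib


open scoped Classical
open Finset

noncomputable section

variable {X : Type*} [Fintype X] [DecidableEq X]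

/-- `d` is an ultrametric on the finite space `X`. -/
def IsUltra (d : X → X → ℝ) : Prop :=
  (∀ x y, 0 ≤ d x y) ∧ (∀ x y, d x y = 0 ↔ x = y) ∧ (∀ x y, d x y = d y x) ∧
    (∀ x y z, d x y ≤ max (d x z) (d z y))

/-- `B` is a ball of the ultrametric space `(X, d)`. -/
def IsBall (d : X → X → ℝ) (B : Finset X) : Prop :=
  ∃ x r, 0 ≤ r ∧ B = Finset.univ.filter (fun y => d x y ≤ r)

/-- `C` is a maximal proper subball of the ball `B`. -/
def MaxSub (d : X → X → ℝ) (B C : Finset X) : Prop :=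
  IsBall d C ∧ C ⊂ B ∧ ∀ D, IsBall d D → C ⊆ D → D ⊂ B → D = C

/-- The measure of a set: sum of the point masses `m`. -/
def nu (m : X → ℝ) (B : Finset X) : ℝ := ∑ x ∈ B, m x

/-- `Δν²(B) = ν(B)² - ∑_j ν(B_j)²` over the maximal proper subballs of `B`. -/
def dnu2 (d : X → X → ℝ) (m : X → ℝ) (B : Finset X) : ℝ :=
  nu m B ^ 2 - ∑ C ∈ Finset.univ.filter (MaxSub d B), nu m C ^ 2

/-- `Δν³(B) = ν(B)³ - ∑_j ν(B_j)³` over the maximal proper subballs of `B`. -/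
def dnu3 (d : X → X → ℝ) (m : X → ℝ) (B : Finset X) : ℝ :=
  nu m B ^ 3 - ∑ C ∈ Finset.univ.filter (MaxSub d B), nu m C ^ 3

/-- `sb x y` is the minimal ball containing the two points `x`, `y`. -/
def SupSpec (d : X → X → ℝ) (sb : X → X → Finset X) : Prop :=
  ∀ x y, IsBall d (sb x y) ∧ x ∈ sb x y ∧ y ∈ sb x y ∧
    ∀ B, IsBall d B → x ∈ B → y ∈ B → sb x y ⊆ B

/-- `pr L A` is the maximal proper subball of `L` containing the subball `A` (the
ball denoted `(L-1, A)` in the paper). -/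
def PredSpec (d : X → X → ℝ) (pr : Finset X → Finset X → Finset X) : Prop :=
  ∀ L A, IsBall d L → IsBall d A → A ⊂ L → MaxSub d L (pr L A) ∧ A ⊆ pr L A


-- balls are nested or disjoint
lemma ball_nested {d : X → X → ℝ} (hd : IsUltra d) {A B : Finset X}
    (hA : IsBall d A) (hB : IsBall d B) {z : X} (hzA : z ∈ A) (hzB : z ∈ B) :
    A ⊆ B ∨ B ⊆ A := by
  obtain ⟨hnn, hzero, hsymm, hmax⟩ := hd
  have key : ∀ (x y : X) (r s : ℝ), r ≤ s → d x z ≤ r → d y z ≤ s →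
      (Finset.univ.filter (fun w => d x w ≤ r)) ⊆ (Finset.univ.filter (fun w => d y w ≤ s)) := by
    intro x y r s hrs hxz hyz
    intro w hw
    simp only [Finset.mem_filter, Finset.mem_univ, true_and] at hw ⊢
    have hzw : d z w ≤ r := le_trans (hmax z w x) (max_le (by rw [hsymm]; exact hxz) hw)
    exact le_trans (hmax y w z) (max_le hyz (le_trans hzw hrs))
  obtain ⟨x, r, hr, rfl⟩ := hA
  obtain ⟨y, s, hs, rfl⟩ := hB
  simp only [Finset.mem_filter, Finset.mem_univ, true_and] at hzA hzB
  rcases le_total r s with h | h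
  · exact Or.inl (key x y r s h hzA hzB)
  · exact Or.inr (key y x s r h hzB hzA)

lemma singleton_ball {d : X → X → ℝ} (hd : IsUltra d) (x : X) : IsBall d {x} := by
  obtain ⟨hnn, hzero, hsymm, hmax⟩ := hd
  refine ⟨x, 0, le_refl 0, ?_⟩
  ext y
  simp only [Finset.mem_singleton, Finset.mem_filter, Finset.mem_univ, true_and]
  constructor
  · intro h; subst h; exact le_of_eq ((hzero _ _).mpr rfl)
  · intro h; exact ((hzero x y).mp (le_antisymm h (hnn x y))).symm

lemma maxsub_unique {d : X → X → ℝ} (hd : IsUltra d) {B C C' : Finset X}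
    (hC : MaxSub d B C) (hC' : MaxSub d B C') {z : X} (hz : z ∈ C) (hz' : z ∈ C') :
    C = C' := by
  rcases ball_nested hd hC.1 hC'.1 hz hz' with h | h
  · exact (hC.2.2 C' hC'.1 h hC'.2.1).symm
  · exact hC'.2.2 C hC.1 h hC.2.1

lemma maxsub_exists {d : X → X → ℝ} (hd : IsUltra d) {B : Finset X}
    (hB : IsBall d B) (hcard : 1 < B.card) {I : X} (hI : I ∈ B) :
    ∃ C, MaxSub d B C ∧ I ∈ C := by
  have hne : ((Finset.univ : Finset (Finset X)).filter
      (fun C => IsBall d C ∧ I ∈ C ∧ C ⊂ B)).Nonempty := by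
    refine ⟨{I}, ?_⟩
    simp only [Finset.mem_filter, Finset.mem_univ, true_and]
    refine ⟨singleton_ball hd I, Finset.mem_singleton_self I, ?_⟩
    rw [Finset.ssubset_iff_of_subset (Finset.singleton_subset_iff.mpr hI)]
    obtain ⟨a, ha, b, hb, hab⟩ := Finset.one_lt_card.mp hcard
    rcases eq_or_ne a I with rfl | h
    · exact ⟨b, hb, fun hc => hab (Finset.mem_singleton.mp hc).symm⟩
    · exact ⟨a, ha, fun hc => h (Finset.mem_singleton.mp hc)⟩
  obtain ⟨C, hCmem, hCmax⟩ := Finset.exists_max_image _ Finset.card hne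
  simp only [Finset.mem_filter, Finset.mem_univ, true_and] at hCmem
  obtain ⟨hCball, hIC, hCB⟩ := hCmem
  refine ⟨C, ⟨hCball, hCB, ?_⟩, hIC⟩
  intro D hD hCD hDB
  have hDmem : D ∈ (Finset.univ : Finset (Finset X)).filter
      (fun C => IsBall d C ∧ I ∈ C ∧ C ⊂ B) := by
    simp only [Finset.mem_filter, Finset.mem_univ, true_and]
    exact ⟨hD, hCD hIC, hDB⟩
  exact (Finset.eq_of_subset_of_card_le hCD (hCmax D hDmem)).symm

lemma maxsub_disjoint {d : X → X → ℝ} (hd : IsUltra d) (B : Finset X) :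
    ((Finset.univ.filter (MaxSub d B) : Finset (Finset X)) : Set (Finset X)).PairwiseDisjoint id := by
  intro C hC C' hC' hne
  simp only [Finset.coe_filter, Set.mem_setOf_eq, Finset.mem_univ, true_and] at hC hC'
  simp only [Function.onFun, id]
  rw [Finset.disjoint_left]
  intro z hz hz'
  exact hne (maxsub_unique hd hC hC' hz hz')

lemma maxsub_cover {d : X → X → ℝ} (hd : IsUltra d) {B : Finset X}
    (hB : IsBall d B) (hcard : 1 < B.card) :
    (Finset.univ.filter (MaxSub d B)).biUnion id = B := by
  ext z
  simp only [Finset.mem_biUnion, Finset.mem_filter, Finset.mem_univ, true_and, id]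
  constructor
  · rintro ⟨C, hC, hz⟩; exact hC.2.1.1 hz
  · intro hz
    obtain ⟨C, hC, hzC⟩ := maxsub_exists hd hB hcard hz
    exact ⟨C, hC, hzC⟩

lemma sum_maxsub {d : X → X → ℝ} (hd : IsUltra d) {B : Finset X}
    (hB : IsBall d B) (hcard : 1 < B.card) (g : X → ℝ) :
    ∑ C ∈ Finset.univ.filter (MaxSub d B), ∑ I ∈ C, g I = ∑ I ∈ B, g I := by
  conv_rhs => rw [← maxsub_cover hd hB hcard]
  rw [Finset.sum_biUnion (maxsub_disjoint hd B)]
  rfl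

def clsB (d : X → X → ℝ) (B : Finset X) (I : X) : Finset X :=
  if h : ∃ C, MaxSub d B C ∧ I ∈ C then h.choose else ∅

lemma clsB_spec {d : X → X → ℝ} {B : Finset X} {I : X}
    (h : ∃ C, MaxSub d B C ∧ I ∈ C) :
    MaxSub d B (clsB d B I) ∧ I ∈ clsB d B I := by
  rw [clsB, dif_pos h]; exact h.choose_spec

set_option maxHeartbeats 1000000 in
/-- The replica functional `∑_{I ≠ J} √(ν(I)ν(J)) Q_{IJ}` for the sup-matrix
`Q_{IJ} = √(ν(I)ν(J)) T(sup(I,J))`. -/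
theorem replica_functional (d : X → X → ℝ) (m : X → ℝ)
    (sb : X → X → Finset X) (T : Finset X → ℝ)
    (hd : IsUltra d) (hm : ∀ x, 0 < m x) (hsb : SupSpec d sb)
    (Q : X → X → ℝ)
    (hQ : ∀ I J : X, Q I J =
      if I = J then 0 else Real.sqrt (m I * m J) * T (sb I J)) :
    (∑ I : X, ∑ J ∈ Finset.univ.filter (fun J : X => J ≠ I),
        Real.sqrt (m I * m J) * Q I J
      = ∑ I : X, ∑ J ∈ Finset.univ.filter (fun J : X => J ≠ I),
          m I * m J * T (sb I J)) ∧
    (∑ I : X, ∑ J ∈ Finset.univ.filter (fun J : X => J ≠ I),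
        m I * m J * T (sb I J)
      = ∑ B ∈ Finset.univ.filter (fun B : Finset X => IsBall d B ∧ 1 < B.card),
          T B * (nu m B ^ 2 - ∑ C ∈ Finset.univ.filter (MaxSub d B), nu m C ^ 2)) := by
  constructor
  · apply Finset.sum_congr rfl
    intro I _
    apply Finset.sum_congr rfl
    intro J hJ
    simp only [Finset.mem_filter, Finset.mem_univ, true_and] at hJ
    rw [hQ, if_neg (fun h => hJ h.symm), ← mul_assoc,
      Real.mul_self_sqrt (mul_nonneg (hm I).le (hm J).le)]
  · -- step 1: fiber the inner sum over the value of `sb I J`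
    have step1 : ∀ I : X,
        ∑ J ∈ Finset.univ.filter (fun J : X => J ≠ I), m I * m J * T (sb I J)
        = ∑ B ∈ Finset.univ.filter (fun B : Finset X => IsBall d B ∧ 1 < B.card),
            ∑ J ∈ Finset.univ.filter (fun J : X => J ≠ I ∧ sb I J = B),
              m I * m J * T (sb I J) := by
      intro I
      have := Finset.sum_fiberwise_of_maps_to (g := fun J : X => sb I J)
        (s := Finset.univ.filter (fun J : X => J ≠ I))
        (t := Finset.univ.filter (fun B : Finset X => IsBall d B ∧ 1 < B.card))
        (f := fun J => m I * m J * T (sb I J)) ?_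
      · rw [← this]
        apply Finset.sum_congr rfl
        intro B _
        rw [Finset.filter_filter]
      · intro J hJ
        simp only [Finset.mem_filter, Finset.mem_univ, true_and] at hJ ⊢
        exact ⟨(hsb I J).1,
          Finset.one_lt_card.mpr ⟨I, (hsb I J).2.1, J, (hsb I J).2.2.1, fun h => hJ h.symm⟩⟩
    simp_rw [step1]
    rw [Finset.sum_comm]
    apply Finset.sum_congr rfl
    intro B hB
    simp only [Finset.mem_filter, Finset.mem_univ, true_and] at hB
    obtain ⟨hBball, hBcard⟩ := hB
    -- fibers
    have hfib_empty : ∀ I : X, I ∉ B →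
        (Finset.univ.filter (fun J : X => J ≠ I ∧ sb I J = B)) = ∅ := by
      intro I hI
      rw [Finset.filter_eq_empty_iff]
      rintro J - ⟨hJI, hsbB⟩
      exact hI (hsbB ▸ (hsb I J).2.1)
    have hfib : ∀ I ∈ B,
        (Finset.univ.filter (fun J : X => J ≠ I ∧ sb I J = B)) = B \ clsB d B I := by
      intro I hI
      obtain ⟨hclsMax, hIcls⟩ := clsB_spec (maxsub_exists hd hBball hBcard hI)
      ext J
      simp only [Finset.mem_filter, Finset.mem_univ, true_and, Finset.mem_sdiff]
      constructor
      · rintro ⟨hJI, hsbB⟩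
        refine ⟨hsbB ▸ (hsb I J).2.2.1, fun hJc => ?_⟩
        have h1 : sb I J ⊆ clsB d B I := (hsb I J).2.2.2 _ hclsMax.1 hIcls hJc
        have h2 : B ⊆ clsB d B I := hsbB ▸ h1
        exact hclsMax.2.1.ne (Finset.Subset.antisymm hclsMax.2.1.subset h2)
      · rintro ⟨hJB, hJc⟩
        have hJI : J ≠ I := by rintro rfl; exact hJc hIcls
        refine ⟨hJI, ?_⟩
        have hsub : sb I J ⊆ B := (hsb I J).2.2.2 B hBball hI hJB
        by_contra hne
        have hss : sb I J ⊂ B := Finset.ssubset_iff_subset_ne.mpr ⟨hsub, hne⟩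
        rcases ball_nested hd (hsb I J).1 hclsMax.1 (hsb I J).2.1 hIcls with h | h
        · exact hJc (h (hsb I J).2.2.1)
        · exact hJc ((hclsMax.2.2 _ (hsb I J).1 h hss) ▸ (hsb I J).2.2.1)
    -- replace T (sb I J) by T B in each fiber
    have e2 : ∀ I : X,
        ∑ J ∈ Finset.univ.filter (fun J : X => J ≠ I ∧ sb I J = B), m I * m J * T (sb I J)
        = ∑ J ∈ Finset.univ.filter (fun J : X => J ≠ I ∧ sb I J = B), m I * m J * T B := by
      intro I
      apply Finset.sum_congr rfl
      intro J hJ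
      simp only [Finset.mem_filter, Finset.mem_univ, true_and] at hJ
      rw [hJ.2]
    simp_rw [e2]
    -- evaluate the fibers
    have e3 : ∑ I : X, ∑ J ∈ Finset.univ.filter (fun J : X => J ≠ I ∧ sb I J = B),
          m I * m J * T B
        = ∑ I ∈ B, m I * (nu m B - nu m (clsB d B I)) * T B := by
      rw [← Finset.sum_subset (Finset.subset_univ B)
        (fun I _ hI => by rw [hfib_empty I hI, Finset.sum_empty])]
      apply Finset.sum_congr rfl
      intro I hI
      obtain ⟨hclsMax, _⟩ := clsB_spec (maxsub_exists hd hBball hBcard hI)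
      rw [hfib I hI, ← Finset.sum_mul, ← Finset.mul_sum,
        Finset.sum_sdiff_eq_sub hclsMax.2.1.subset]
      rfl
    rw [e3]
    -- the partition identity
    have hS : ∑ I ∈ B, m I * nu m (clsB d B I)
        = ∑ C ∈ Finset.univ.filter (MaxSub d B), nu m C ^ 2 := by
      rw [← sum_maxsub hd hBball hBcard (fun I => m I * nu m (clsB d B I))]
      apply Finset.sum_congr rfl
      intro C hC
      simp only [Finset.mem_filter, Finset.mem_univ, true_and] at hC
      have hcls : ∀ I ∈ C, clsB d B I = C := by
        intro I hIC
        obtain ⟨hM, hm'⟩ := clsB_spec ⟨C, hC, hIC⟩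
        exact maxsub_unique hd hM hC hm' hIC
      rw [Finset.sum_congr rfl (fun I hIC => by rw [hcls I hIC]), ← Finset.sum_mul, sq]
      rfl
    have hB2 : ∑ I ∈ B, m I * nu m B = nu m B ^ 2 := by
      rw [← Finset.sum_mul, sq]
      rfl
    calc ∑ I ∈ B, m I * (nu m B - nu m (clsB d B I)) * T B
        = (∑ I ∈ B, (m I * nu m B - m I * nu m (clsB d B I))) * T B := by
          rw [← Finset.sum_mul]
          congr 1
          exact Finset.sum_congr rfl (fun I _ => by ring)
      _ = (nu m B ^ 2 - ∑ C ∈ Finset.univ.filter (MaxSub d B), nu m C ^ 2) * T B := by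
          rw [Finset.sum_sub_distrib, hS, hB2]
      _ = T B * (nu m B ^ 2 - ∑ C ∈ Finset.univ.filter (MaxSub d B), nu m C ^ 2) := by
          ring
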